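/- Let m, q be positive integers, let D ∈ ℝ^{m×m} and 𝓡 ∈ ℝ^{q×q} be symmetric positive definite, let L ∈ ℝ^{m×m} be invertible, and let 𝓗 ∈ ℝ^{q×m}. Let 𝓐 = [[D, 0, L], [0, 𝓡, 𝓗], [Lᵀ, 𝓗ᵀ, 0]] and 𝓟 = [[D, 0, L], [0, 𝓡, 0], [Lᵀ, 0, 0]] (both in ℝ^{(2m+q)×(2m+q)}). Then every eigenvalue τ ∈ ℂ of 𝓟⁻¹𝓐 satisfies Re(τ) = 1 and (Im(τ))² · λ_min(𝓡) ≤ λ_max(𝓗 L⁻¹ D L⁻ᵀ 𝓗ᵀ), where λ_min(𝓡) is the smallest eigenvalue of the symmetric positive definite matrix 𝓡 and λ_max(𝓗 L⁻¹ D L⁻ᵀ 𝓗ᵀ) is the largest eigenvalue of the symmetric positive semidefinite matrix 𝓗 L⁻¹ D L⁻ᵀ 𝓗ᵀ, and L⁻ᵀ denotes (L⁻¹)ᵀ. -/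

import Mathlib

open Matrix

section Helpers

lemma qf_le_iSup {n : Type*} [Fintype n] [DecidableEq n] [Nonempty n]
    {A : Matrix n n ℝ} (hA : A.IsHermitian) (x : n → ℝ) :
    x ⬝ᵥ (A *ᵥ x) ≤ (⨆ i, hA.eigenvalues i) * (x ⬝ᵥ x) := by
  classical
  set U : Matrix n n ℝ := (hA.eigenvectorUnitary : Matrix n n ℝ) with hU
  set f := hA.eigenvalues with hf
  set c := Uᵀ *ᵥ x with hc
  have hUU : U * star U = 1 := (Matrix.mem_unitaryGroup_iff).mp (hA.eigenvectorUnitary).2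
  have hstar : star U = Uᵀ := by
    rw [Matrix.star_eq_conjTranspose, conjTranspose_eq_transpose_of_trivial]
  have hspec : A = U * diagonal f * Uᵀ := by
    have := hA.spectral_theorem
    rw [Unitary.conjStarAlgAut_apply, ← hU, hstar] at this
    simpa using this
  have key : x ⬝ᵥ (A *ᵥ x) = ∑ i, f i * (c i * c i) := by
    rw [hspec]
    rw [← mulVec_mulVec, ← mulVec_mulVec, dotProduct_mulVec, ← mulVec_transpose]
    simp [hc, dotProduct, mulVec_diagonal, mul_comm, mul_assoc, mul_left_comm]
  have key2 : x ⬝ᵥ x = ∑ i, c i * c i := by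
    have : c ⬝ᵥ c = x ⬝ᵥ x := by
      rw [hc, dotProduct_mulVec, ← mulVec_transpose, transpose_transpose, mulVec_mulVec]
      rw [← hstar, hUU, one_mulVec]
    simpa [dotProduct] using this.symm
  rw [key, key2, Finset.mul_sum]
  apply Finset.sum_le_sum
  intro i _
  have h1 : f i ≤ ⨆ i, f i := le_ciSup (Set.Finite.bddAbove (Set.finite_range f)) i
  exact mul_le_mul_of_nonneg_right h1 (mul_self_nonneg _)

lemma iInf_le_qf {n : Type*} [Fintype n] [DecidableEq n] [Nonempty n]
    {A : Matrix n n ℝ} (hA : A.IsHermitian) (x : n → ℝ) :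
    (⨅ i, hA.eigenvalues i) * (x ⬝ᵥ x) ≤ x ⬝ᵥ (A *ᵥ x) := by
  classical
  set U : Matrix n n ℝ := (hA.eigenvectorUnitary : Matrix n n ℝ) with hU
  set f := hA.eigenvalues with hf
  set c := Uᵀ *ᵥ x with hc
  have hUU : U * star U = 1 := (Matrix.mem_unitaryGroup_iff).mp (hA.eigenvectorUnitary).2
  have hstar : star U = Uᵀ := by
    rw [Matrix.star_eq_conjTranspose, conjTranspose_eq_transpose_of_trivial]
  have hspec : A = U * diagonal f * Uᵀ := by
    have := hA.spectral_theorem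
    rw [Unitary.conjStarAlgAut_apply, ← hU, hstar] at this
    simpa using this
  have key : x ⬝ᵥ (A *ᵥ x) = ∑ i, f i * (c i * c i) := by
    rw [hspec]
    rw [← mulVec_mulVec, ← mulVec_mulVec, dotProduct_mulVec, ← mulVec_transpose]
    simp [hc, dotProduct, mulVec_diagonal, mul_comm, mul_assoc, mul_left_comm]
  have key2 : x ⬝ᵥ x = ∑ i, c i * c i := by
    have : c ⬝ᵥ c = x ⬝ᵥ x := by
      rw [hc, dotProduct_mulVec, ← mulVec_transpose, transpose_transpose, mulVec_mulVec]
      rw [← hstar, hUU, one_mulVec]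
    simpa [dotProduct] using this.symm
  rw [key, key2, Finset.mul_sum]
  apply Finset.sum_le_sum
  intro i _
  have h1 : (⨅ i, f i) ≤ f i := ciInf_le (Set.Finite.bddBelow (Set.finite_range f)) i
  exact mul_le_mul_of_nonneg_right h1 (mul_self_nonneg _)

lemma star_dot_real {n : Type*} [Fintype n] (M : Matrix n n ℝ) (hM : Mᵀ = M) (y : n → ℂ) :
    star y ⬝ᵥ ((M.map (algebraMap ℝ ℂ)) *ᵥ y)
      = (((fun i => (y i).re) ⬝ᵥ (M *ᵥ fun i => (y i).re)
          + (fun i => (y i).im) ⬝ᵥ (M *ᵥ fun i => (y i).im) : ℝ) : ℂ) := by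
  classical
  have expand : star y ⬝ᵥ ((M.map (algebraMap ℝ ℂ)) *ᵥ y)
      = ∑ i, ∑ j, (starRingEnd ℂ) (y i) * ((M i j : ℝ) : ℂ) * y j := by
    simp [dotProduct, mulVec, Finset.mul_sum, mul_assoc, Matrix.map_apply]
  rw [expand]
  apply Complex.ext
  · simp only [Complex.re_sum, Complex.ofReal_re]
    rw [dotProduct, dotProduct]
    rw [← Finset.sum_add_distrib]
    apply Finset.sum_congr rfl
    intro i _
    simp only [mulVec, dotProduct, Finset.mul_sum, Complex.re_sum]
    rw [← Finset.sum_add_distrib]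
    apply Finset.sum_congr rfl
    intro j _
    simp [Complex.mul_re, Complex.mul_im]
    ring
  · simp only [Complex.im_sum, Complex.ofReal_im]
    have swap : ∑ i, ∑ j, ((starRingEnd ℂ) (y i) * ((M i j : ℝ) : ℂ) * y j).im
        = ∑ i, ∑ j, M i j * ((y i).re * (y j).im - (y i).im * (y j).re) := by
      apply Finset.sum_congr rfl; intro i _
      apply Finset.sum_congr rfl; intro j _
      simp [Complex.mul_re, Complex.mul_im]
      ring
    rw [swap]
    have split : ∑ i, ∑ j, M i j * ((y i).re * (y j).im - (y i).im * (y j).re)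
        = ∑ i, ∑ j, M i j * ((y i).re * (y j).im) - ∑ i, ∑ j, M i j * ((y i).im * (y j).re) := by
      simp [mul_sub, Finset.sum_sub_distrib]
    rw [split]
    have h2 : ∑ i, ∑ j, M i j * ((y i).im * (y j).re)
        = ∑ i, ∑ j, M i j * ((y i).re * (y j).im) := by
      rw [Finset.sum_comm]
      apply Finset.sum_congr rfl; intro i _
      apply Finset.sum_congr rfl; intro j _
      have : M j i = M i j := by conv_lhs => rw [← hM, transpose_apply]
      rw [this]; ring
    rw [h2]; ring

end Helpers

/-- A 3×3 block matrix with row/column block sizes `m, q, m`, assembled from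
nested `fromBlocks` (index type `(Fin m ⊕ Fin q) ⊕ Fin m`). -/
def block3 {m q : ℕ}
    (A11 : Matrix (Fin m) (Fin m) ℝ) (A12 : Matrix (Fin m) (Fin q) ℝ)
    (A13 : Matrix (Fin m) (Fin m) ℝ)
    (A21 : Matrix (Fin q) (Fin m) ℝ) (A22 : Matrix (Fin q) (Fin q) ℝ)
    (A23 : Matrix (Fin q) (Fin m) ℝ)
    (A31 : Matrix (Fin m) (Fin m) ℝ) (A32 : Matrix (Fin m) (Fin q) ℝ)
    (A33 : Matrix (Fin m) (Fin m) ℝ) :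
    Matrix ((Fin m ⊕ Fin q) ⊕ Fin m) ((Fin m ⊕ Fin q) ⊕ Fin m) ℝ :=
  Matrix.fromBlocks (Matrix.fromBlocks A11 A12 A21 A22)
    (Matrix.fromRows A13 A23) (Matrix.fromCols A31 A32) A33

section Block3

/-- A general-coefficient version of `block3`. -/
def block3' {R : Type*} {m q : ℕ}
    (A11 : Matrix (Fin m) (Fin m) R) (A12 : Matrix (Fin m) (Fin q) R)
    (A13 : Matrix (Fin m) (Fin m) R)
    (A21 : Matrix (Fin q) (Fin m) R) (A22 : Matrix (Fin q) (Fin q) R)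
    (A23 : Matrix (Fin q) (Fin m) R)
    (A31 : Matrix (Fin m) (Fin m) R) (A32 : Matrix (Fin m) (Fin q) R)
    (A33 : Matrix (Fin m) (Fin m) R) :
    Matrix ((Fin m ⊕ Fin q) ⊕ Fin m) ((Fin m ⊕ Fin q) ⊕ Fin m) R :=
  Matrix.fromBlocks (Matrix.fromBlocks A11 A12 A21 A22)
    (Matrix.fromRows A13 A23) (Matrix.fromCols A31 A32) A33

lemma block3_eq {m q : ℕ} (A11 A13 A31 A33 : Matrix (Fin m) (Fin m) ℝ)
    (A12 A32 : Matrix (Fin m) (Fin q) ℝ) (A21 A23 : Matrix (Fin q) (Fin m) ℝ)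
    (A22 : Matrix (Fin q) (Fin q) ℝ) :
    block3 A11 A12 A13 A21 A22 A23 A31 A32 A33
      = block3' A11 A12 A13 A21 A22 A23 A31 A32 A33 := rfl

lemma block3'_mul {R : Type*} [CommRing R] {m q : ℕ}
    (A11 A13 A31 A33 B11 B13 B31 B33 : Matrix (Fin m) (Fin m) R)
    (A12 A32 B12 B32 : Matrix (Fin m) (Fin q) R)
    (A21 A23 B21 B23 : Matrix (Fin q) (Fin m) R)
    (A22 B22 : Matrix (Fin q) (Fin q) R) :
    block3' A11 A12 A13 A21 A22 A23 A31 A32 A33 *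
      block3' B11 B12 B13 B21 B22 B23 B31 B32 B33 =
    block3' (A11*B11 + A12*B21 + A13*B31) (A11*B12 + A12*B22 + A13*B32)
      (A11*B13 + A12*B23 + A13*B33)
      (A21*B11 + A22*B21 + A23*B31) (A21*B12 + A22*B22 + A23*B32)
      (A21*B13 + A22*B23 + A23*B33)
      (A31*B11 + A32*B21 + A33*B31) (A31*B12 + A32*B22 + A33*B32)
      (A31*B13 + A32*B23 + A33*B33) := by
  unfold block3'
  rw [fromBlocks_multiply, fromBlocks_multiply, fromRows_mul_fromCols,
    fromBlocks_mul_fromRows, fromRows_mul, fromCols_mul_fromBlocks,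
    mul_fromCols, fromCols_mul_fromRows]
  ext ((i|i)|i) ((j|j)|j) <;> simp [fromBlocks, fromRows_apply_inl, fromRows_apply_inr, fromCols]

lemma block3'_one {R : Type*} [CommRing R] {m q : ℕ} :
    block3' (1 : Matrix (Fin m) (Fin m) R) 0 0 0 (1 : Matrix (Fin q) (Fin q) R) 0 0 0 1 = 1 := by
  unfold block3'
  rw [fromRows_zero, fromCols_zero, fromBlocks_one, fromBlocks_one]

lemma block3_map {m q : ℕ} (A11 A13 A31 A33 : Matrix (Fin m) (Fin m) ℝ)
    (A12 A32 : Matrix (Fin m) (Fin q) ℝ) (A21 A23 : Matrix (Fin q) (Fin m) ℝ)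
    (A22 : Matrix (Fin q) (Fin q) ℝ) (f : ℝ → ℂ) :
    (block3 A11 A12 A13 A21 A22 A23 A31 A32 A33).map f
      = block3' (A11.map f) (A12.map f) (A13.map f) (A21.map f) (A22.map f)
          (A23.map f) (A31.map f) (A32.map f) (A33.map f) := by
  ext ((i|i)|i) ((j|j)|j) <;> simp [block3, block3', fromBlocks, fromRows_apply_inl, fromRows_apply_inr, fromCols]

lemma block3'_mulVec {R : Type*} [CommRing R] {m q : ℕ}
    (A11 A13 A31 A33 : Matrix (Fin m) (Fin m) R)
    (A12 A32 : Matrix (Fin m) (Fin q) R) (A21 A23 : Matrix (Fin q) (Fin m) R)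
    (A22 : Matrix (Fin q) (Fin q) R) (x z : Fin m → R) (y : Fin q → R) :
    block3' A11 A12 A13 A21 A22 A23 A31 A32 A33 *ᵥ Sum.elim (Sum.elim x y) z
      = Sum.elim (Sum.elim (A11 *ᵥ x + A12 *ᵥ y + A13 *ᵥ z)
          (A21 *ᵥ x + A22 *ᵥ y + A23 *ᵥ z)) (A31 *ᵥ x + A32 *ᵥ y + A33 *ᵥ z) := by
  ext ((i|i)|i) <;>
    simp [block3', fromBlocks_mulVec, fromRows_mulVec, fromCols_mulVec_sumElim,
      Sum.elim_comp_inl, Sum.elim_comp_inr, add_assoc]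

end Block3

set_option maxHeartbeats 1000000 in
/-- Every complex eigenvalue `τ` of the preconditioned matrix `𝓟⁻¹𝓐`, where `𝓐` is the
weak constraint 4D-Var saddle point matrix and `𝓟` is the inexact constraint
preconditioner with exact constraint block `L` and observation block replaced by `0`,
satisfies `Re(τ) = 1` and `(Im τ)² λ_min(𝓡) ≤ λ_max(𝓗L⁻¹DL⁻ᵀ𝓗ᵀ)`. -/
theorem exact_constraint_prec_eigenvalues (m q : ℕ) (hm : 0 < m) (hq : 0 < q)
    (D : Matrix (Fin m) (Fin m) ℝ) (hD : D.PosDef)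
    (𝓡 : Matrix (Fin q) (Fin q) ℝ) (h𝓡 : 𝓡.PosDef)
    (L : Matrix (Fin m) (Fin m) ℝ) (hL : IsUnit L)
    (𝓗 : Matrix (Fin q) (Fin m) ℝ)
    (hG : (𝓗 * L⁻¹ * D * (L⁻¹)ᵀ * 𝓗ᵀ).IsHermitian) :
    ∀ τ ∈ spectrum ℂ
        (((block3 D 0 L 0 𝓡 0 Lᵀ 0 0)⁻¹ *
            block3 D 0 L 0 𝓡 𝓗 Lᵀ 𝓗ᵀ 0).map (algebraMap ℝ ℂ)),
      τ.re = 1 ∧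
        τ.im ^ 2 * (⨅ i : Fin q, h𝓡.1.eigenvalues i) ≤ ⨆ i : Fin q, hG.eigenvalues i := by
  classical
  intro τ hτ
  haveI : Nonempty (Fin q) := ⟨⟨0, hq⟩⟩
  have hdL : IsUnit L.det := (Matrix.isUnit_iff_isUnit_det L).mp hL
  have hd𝓡 : IsUnit 𝓡.det := isUnit_iff_ne_zero.mpr h𝓡.det_pos.ne'
  -- positivity of G
  have hGpsd : (𝓗 * L⁻¹ * D * (L⁻¹)ᵀ * 𝓗ᵀ).PosSemidef := by
    have h := (hD.posSemidef).mul_mul_conjTranspose_same (𝓗 * L⁻¹)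
    have heq : (𝓗 * L⁻¹) * D * (𝓗 * L⁻¹)ᴴ = 𝓗 * L⁻¹ * D * (L⁻¹)ᵀ * 𝓗ᵀ := by
      rw [conjTranspose_eq_transpose_of_trivial, transpose_mul]
      rw [Matrix.mul_assoc (𝓗 * L⁻¹ * D)]
    rwa [heq] at h
  have hsup_nonneg : (0 : ℝ) ≤ ⨆ i : Fin q, hG.eigenvalues i := by
    have hmem : (0:ℝ) ≤ hG.eigenvalues (⟨0, hq⟩ : Fin q) := hGpsd.eigenvalues_nonneg _
    have hle : hG.eigenvalues (⟨0, hq⟩ : Fin q) ≤ ⨆ i : Fin q, hG.eigenvalues i :=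
      le_ciSup (Set.Finite.bddAbove (Set.finite_range _)) _
    exact le_trans hmem hle
  -- basic inverse identities over ℝ
  have hLL : L * L⁻¹ = 1 := mul_nonsing_inv L hdL
  have hLLi : L⁻¹ * L = 1 := nonsing_inv_mul L hdL
  have h𝓡𝓡 : 𝓡 * 𝓡⁻¹ = 1 := mul_nonsing_inv 𝓡 hd𝓡
  have hLt : Lᵀ * (L⁻¹)ᵀ = 1 := by rw [← transpose_mul, hLLi, transpose_one]
  have hLti : (L⁻¹)ᵀ * Lᵀ = 1 := by rw [← transpose_mul, hLL, transpose_one]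
  -- invertibility of the preconditioner 𝓟
  have hPQ : block3 D 0 L 0 𝓡 0 Lᵀ 0 0 *
      (block3' 0 0 (L⁻¹)ᵀ 0 𝓡⁻¹ 0 L⁻¹ 0 (-(L⁻¹ * D * (L⁻¹)ᵀ))) = 1 := by
    rw [block3_eq, block3'_mul]
    have hfix : L * (L⁻¹ * D * (L⁻¹)ᵀ) = D * (L⁻¹)ᵀ := by
      rw [← Matrix.mul_assoc, ← Matrix.mul_assoc, hLL, Matrix.one_mul]
    simp only [Matrix.mul_zero, Matrix.zero_mul, add_zero, zero_add, Matrix.mul_neg,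
      neg_zero, hfix, add_neg_cancel, hLL, h𝓡𝓡, hLt]
    exact block3'_one
  have h𝓟unit : IsUnit (block3 D 0 L 0 𝓡 0 Lᵀ 0 0).det := by
    have hdet := congrArg Matrix.det hPQ
    rw [Matrix.det_mul, Matrix.det_one] at hdet
    exact IsUnit.of_mul_eq_one _ hdet
  have hPinvA : block3 D 0 L 0 𝓡 0 Lᵀ 0 0 *
      ((block3 D 0 L 0 𝓡 0 Lᵀ 0 0)⁻¹ * block3 D 0 L 0 𝓡 𝓗 Lᵀ 𝓗ᵀ 0)
      = block3 D 0 L 0 𝓡 𝓗 Lᵀ 𝓗ᵀ 0 := by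
    rw [← Matrix.mul_assoc, Matrix.mul_nonsing_inv _ h𝓟unit, Matrix.one_mul]
  have hPAc : (block3 D 0 L 0 𝓡 0 Lᵀ 0 0).map (algebraMap ℝ ℂ) *
      ((block3 D 0 L 0 𝓡 0 Lᵀ 0 0)⁻¹ * block3 D 0 L 0 𝓡 𝓗 Lᵀ 𝓗ᵀ 0).map (algebraMap ℝ ℂ)
      = (block3 D 0 L 0 𝓡 𝓗 Lᵀ 𝓗ᵀ 0).map (algebraMap ℝ ℂ) := by
    rw [← Matrix.map_mul, hPinvA]
  -- eigenvector
  have hns := spectrum.mem_iff.mp hτ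
  have hdet0 : (algebraMap ℂ (Matrix ((Fin m ⊕ Fin q) ⊕ Fin m) ((Fin m ⊕ Fin q) ⊕ Fin m) ℂ) τ
      - ((block3 D 0 L 0 𝓡 0 Lᵀ 0 0)⁻¹ * block3 D 0 L 0 𝓡 𝓗 Lᵀ 𝓗ᵀ 0).map (algebraMap ℝ ℂ)).det
      = 0 := by
    by_contra h
    exact hns ((Matrix.isUnit_iff_isUnit_det _).mpr (isUnit_iff_ne_zero.mpr h))
  obtain ⟨v, hv0, hveq⟩ := (Matrix.exists_mulVec_eq_zero_iff).mpr hdet0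
  have hMv : (((block3 D 0 L 0 𝓡 0 Lᵀ 0 0)⁻¹ * block3 D 0 L 0 𝓡 𝓗 Lᵀ 𝓗ᵀ 0).map
      (algebraMap ℝ ℂ)) *ᵥ v = τ • v := by
    rw [sub_mulVec] at hveq
    have halg : (algebraMap ℂ (Matrix ((Fin m ⊕ Fin q) ⊕ Fin m) ((Fin m ⊕ Fin q) ⊕ Fin m) ℂ) τ)
        *ᵥ v = τ • v := by
      rw [Matrix.algebraMap_eq_diagonal]
      ext i
      simp [mulVec_diagonal]
    rw [halg] at hveq
    exact (sub_eq_zero.mp hveq).symm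
  have hAv : ((block3 D 0 L 0 𝓡 𝓗 Lᵀ 𝓗ᵀ 0).map (algebraMap ℝ ℂ)) *ᵥ v
      = τ • (((block3 D 0 L 0 𝓡 0 Lᵀ 0 0).map (algebraMap ℝ ℂ)) *ᵥ v) := by
    rw [← hPAc, ← mulVec_mulVec, hMv, mulVec_smul]
  -- components
  set x : Fin m → ℂ := fun i => v (Sum.inl (Sum.inl i)) with hx
  set y : Fin q → ℂ := fun i => v (Sum.inl (Sum.inr i)) with hy
  set z : Fin m → ℂ := fun i => v (Sum.inr i) with hz
  have hvxyz : v = Sum.elim (Sum.elim x y) z := by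
    funext i; rcases i with (i|i)|i <;> rfl
  have hAc : (block3 D 0 L 0 𝓡 𝓗 Lᵀ 𝓗ᵀ 0).map (algebraMap ℝ ℂ)
      = block3' (D.map (algebraMap ℝ ℂ)) 0 (L.map (algebraMap ℝ ℂ)) 0 (𝓡.map (algebraMap ℝ ℂ))
          (𝓗.map (algebraMap ℝ ℂ)) (Lᵀ.map (algebraMap ℝ ℂ)) (𝓗ᵀ.map (algebraMap ℝ ℂ)) 0 := by
    rw [block3_map]
    simp [Matrix.map_zero (⇑(algebraMap ℝ ℂ)) (map_zero (algebraMap ℝ ℂ))]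
  have hPc : (block3 D 0 L 0 𝓡 0 Lᵀ 0 0).map (algebraMap ℝ ℂ)
      = block3' (D.map (algebraMap ℝ ℂ)) 0 (L.map (algebraMap ℝ ℂ)) 0 (𝓡.map (algebraMap ℝ ℂ))
          0 (Lᵀ.map (algebraMap ℝ ℂ)) 0 0 := by
    rw [block3_map]
    simp [Matrix.map_zero (⇑(algebraMap ℝ ℂ)) (map_zero (algebraMap ℝ ℂ))]
  rw [hAc, hPc, hvxyz, block3'_mulVec, block3'_mulVec] at hAv
  have e1 : (D.map (algebraMap ℝ ℂ)) *ᵥ x + (L.map (algebraMap ℝ ℂ)) *ᵥ z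
      = τ • ((D.map (algebraMap ℝ ℂ)) *ᵥ x + (L.map (algebraMap ℝ ℂ)) *ᵥ z) := by
    funext i
    have := congrFun hAv (Sum.inl (Sum.inl i))
    simpa [zero_mulVec, add_zero] using this
  have e2 : (𝓡.map (algebraMap ℝ ℂ)) *ᵥ y + (𝓗.map (algebraMap ℝ ℂ)) *ᵥ z
      = τ • ((𝓡.map (algebraMap ℝ ℂ)) *ᵥ y) := by
    funext i
    have := congrFun hAv (Sum.inl (Sum.inr i))
    simpa [zero_mulVec, add_zero, zero_add] using this
  have e3 : (Lᵀ.map (algebraMap ℝ ℂ)) *ᵥ x + (𝓗ᵀ.map (algebraMap ℝ ℂ)) *ᵥ y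
      = τ • ((Lᵀ.map (algebraMap ℝ ℂ)) *ᵥ x) := by
    funext i
    have := congrFun hAv (Sum.inr i)
    simpa [zero_mulVec, add_zero, zero_add] using this
  rcases eq_or_ne τ 1 with h1 | hne
  · subst h1
    refine ⟨Complex.one_re, ?_⟩
    simpa [Complex.one_im] using hsup_nonneg
  -- main case : τ ≠ 1
  have hu : τ - 1 ≠ 0 := sub_ne_zero.mpr hne
  have hw : (D.map (algebraMap ℝ ℂ)) *ᵥ x + (L.map (algebraMap ℝ ℂ)) *ᵥ z = 0 := by
    have h : (1 - τ) • ((D.map (algebraMap ℝ ℂ)) *ᵥ x + (L.map (algebraMap ℝ ℂ)) *ᵥ z) = 0 := by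
      rw [sub_smul, one_smul, sub_eq_zero]; exact e1
    rcases smul_eq_zero.mp h with h' | h'
    · exact absurd (by rwa [sub_eq_zero, eq_comm] at h') hne
    · exact h'
  have he3 : (𝓗ᵀ.map (algebraMap ℝ ℂ)) *ᵥ y = (τ - 1) • ((Lᵀ.map (algebraMap ℝ ℂ)) *ᵥ x) := by
    rw [sub_smul, one_smul, ← e3]
    abel
  have he2 : (𝓗.map (algebraMap ℝ ℂ)) *ᵥ z = (τ - 1) • ((𝓡.map (algebraMap ℝ ℂ)) *ᵥ y) := by
    rw [sub_smul, one_smul, ← e2]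
    abel
  -- inverse identities over ℂ
  have hLinvL : (L⁻¹.map (algebraMap ℝ ℂ)) * (L.map (algebraMap ℝ ℂ)) = 1 := by
    rw [← Matrix.map_mul, hLLi]
    exact Matrix.map_one _ (map_zero _) (map_one _)
  have hLtinv : ((L⁻¹)ᵀ.map (algebraMap ℝ ℂ)) * (Lᵀ.map (algebraMap ℝ ℂ)) = 1 := by
    rw [← Matrix.map_mul, hLti]
    exact Matrix.map_one _ (map_zero _) (map_one _)
  -- y ≠ 0
  have hyne : y ≠ 0 := by
    intro hy0
    have hLx : (Lᵀ.map (algebraMap ℝ ℂ)) *ᵥ x = 0 := by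
      have h0 : (τ - 1) • ((Lᵀ.map (algebraMap ℝ ℂ)) *ᵥ x) = 0 := by
        rw [← he3, hy0, mulVec_zero]
      rcases smul_eq_zero.mp h0 with h' | h'
      · exact absurd h' hu
      · exact h'
    have hx0 : x = 0 := by
      have h : (((L⁻¹)ᵀ.map (algebraMap ℝ ℂ)) * (Lᵀ.map (algebraMap ℝ ℂ))) *ᵥ x = 0 := by
        rw [← mulVec_mulVec, hLx, mulVec_zero]
      rwa [hLtinv, one_mulVec] at h
    have hz0 : z = 0 := by
      have hLz : (L.map (algebraMap ℝ ℂ)) *ᵥ z = 0 := by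
        rw [hx0, mulVec_zero, zero_add] at hw; exact hw
      have h : ((L⁻¹.map (algebraMap ℝ ℂ)) * (L.map (algebraMap ℝ ℂ))) *ᵥ z = 0 := by
        rw [← mulVec_mulVec, hLz, mulVec_zero]
      rwa [hLinvL, one_mulVec] at h
    apply hv0
    rw [hvxyz, hx0, hy0, hz0]
    funext i; rcases i with (i|i)|i <;> rfl
  -- the key identity : G y = -(τ-1)^2 • (𝓡 y)
  have hDx : (D.map (algebraMap ℝ ℂ)) *ᵥ x = -((L.map (algebraMap ℝ ℂ)) *ᵥ z) := by
    rw [eq_neg_iff_add_eq_zero]; exact hw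
  have s2 : ((L⁻¹)ᵀ.map (algebraMap ℝ ℂ)) *ᵥ ((𝓗ᵀ.map (algebraMap ℝ ℂ)) *ᵥ y)
      = (τ - 1) • x := by
    rw [he3, mulVec_smul, mulVec_mulVec, hLtinv, one_mulVec]
  have s4 : (L⁻¹.map (algebraMap ℝ ℂ)) *ᵥ ((D.map (algebraMap ℝ ℂ)) *ᵥ
      (((L⁻¹)ᵀ.map (algebraMap ℝ ℂ)) *ᵥ ((𝓗ᵀ.map (algebraMap ℝ ℂ)) *ᵥ y)))
      = -((τ - 1) • z) := by
    rw [s2, mulVec_smul, hDx, mulVec_smul, mulVec_neg, mulVec_mulVec, hLinvL, one_mulVec,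
      smul_neg]
  have s5 : (𝓗.map (algebraMap ℝ ℂ)) *ᵥ ((L⁻¹.map (algebraMap ℝ ℂ)) *ᵥ
      ((D.map (algebraMap ℝ ℂ)) *ᵥ (((L⁻¹)ᵀ.map (algebraMap ℝ ℂ)) *ᵥ
      ((𝓗ᵀ.map (algebraMap ℝ ℂ)) *ᵥ y))))
      = (-((τ - 1)^2)) • ((𝓡.map (algebraMap ℝ ℂ)) *ᵥ y) := by
    rw [s4, mulVec_neg, mulVec_smul, he2, smul_smul, ← neg_smul, ← pow_two]
  have key : ((𝓗 * L⁻¹ * D * (L⁻¹)ᵀ * 𝓗ᵀ).map (algebraMap ℝ ℂ)) *ᵥ y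
      = (-((τ - 1)^2)) • ((𝓡.map (algebraMap ℝ ℂ)) *ᵥ y) := by
    rw [← s5]
    simp only [Matrix.map_mul, mulVec_mulVec, Matrix.mul_assoc]
  -- quadratic forms
  have hGt : (𝓗 * L⁻¹ * D * (L⁻¹)ᵀ * 𝓗ᵀ)ᵀ = 𝓗 * L⁻¹ * D * (L⁻¹)ᵀ * 𝓗ᵀ := by
    rw [← conjTranspose_eq_transpose_of_trivial]; exact hG
  have h𝓡t : 𝓡ᵀ = 𝓡 := by
    rw [← conjTranspose_eq_transpose_of_trivial]; exact h𝓡.1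
  set a : Fin q → ℝ := fun i => (y i).re with ha
  set b : Fin q → ℝ := fun i => (y i).im with hb
  set g : ℝ := a ⬝ᵥ ((𝓗 * L⁻¹ * D * (L⁻¹)ᵀ * 𝓗ᵀ) *ᵥ a)
    + b ⬝ᵥ ((𝓗 * L⁻¹ * D * (L⁻¹)ᵀ * 𝓗ᵀ) *ᵥ b) with hgdef
  set r : ℝ := a ⬝ᵥ (𝓡 *ᵥ a) + b ⬝ᵥ (𝓡 *ᵥ b) with hrdef
  have hcq : ((g : ℝ) : ℂ) = (-((τ - 1)^2)) * ((r : ℝ) : ℂ) := by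
    have l1 : star y ⬝ᵥ (((𝓗 * L⁻¹ * D * (L⁻¹)ᵀ * 𝓗ᵀ).map (algebraMap ℝ ℂ)) *ᵥ y)
        = ((g : ℝ) : ℂ) := star_dot_real _ hGt y
    have l2 : star y ⬝ᵥ ((𝓡.map (algebraMap ℝ ℂ)) *ᵥ y) = ((r : ℝ) : ℂ) :=
      star_dot_real _ h𝓡t y
    rw [key, dotProduct_smul, smul_eq_mul, l2] at l1
    exact l1.symm
  -- positivity facts
  have hab : a ≠ 0 ∨ b ≠ 0 := by
    by_contra h
    push_neg at h
    apply hyne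
    funext i
    exact Complex.ext (congrFun h.1 i) (congrFun h.2 i)
  have hg0 : 0 ≤ g := by
    have h1 : 0 ≤ a ⬝ᵥ ((𝓗 * L⁻¹ * D * (L⁻¹)ᵀ * 𝓗ᵀ) *ᵥ a) := by simpa using hGpsd.dotProduct_mulVec_nonneg a
    have h2 : 0 ≤ b ⬝ᵥ ((𝓗 * L⁻¹ * D * (L⁻¹)ᵀ * 𝓗ᵀ) *ᵥ b) := by simpa using hGpsd.dotProduct_mulVec_nonneg b
    exact add_nonneg h1 h2
  have hr0 : 0 < r := by
    rcases hab with h' | h'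
    · have h1 : 0 < a ⬝ᵥ (𝓡 *ᵥ a) := by simpa using h𝓡.dotProduct_mulVec_pos h'
      have h2 : 0 ≤ b ⬝ᵥ (𝓡 *ᵥ b) := by simpa using h𝓡.posSemidef.dotProduct_mulVec_nonneg b
      exact add_pos_of_pos_of_nonneg h1 h2
    · have h1 : 0 ≤ a ⬝ᵥ (𝓡 *ᵥ a) := by simpa using h𝓡.posSemidef.dotProduct_mulVec_nonneg a
      have h2 : 0 < b ⬝ᵥ (𝓡 *ᵥ b) := by simpa using h𝓡.dotProduct_mulVec_pos h'
      exact add_pos_of_nonneg_of_pos h1 h2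
  -- derive u^2 = t real
  have hrne : ((r : ℝ) : ℂ) ≠ 0 := by
    exact_mod_cast hr0.ne'
  have hu2 : ((τ - 1) * (τ - 1) : ℂ) = (((-(g / r) : ℝ)) : ℂ) := by
    have hmul : ((τ - 1) * (τ - 1)) * ((r : ℝ) : ℂ) = -((g : ℝ) : ℂ) := by
      have := hcq
      rw [pow_two] at this
      linear_combination this
    have hmul2 : (((-(g / r) : ℝ)) : ℂ) * ((r : ℝ) : ℂ) = -((g : ℝ) : ℂ) := by
      push_cast
      field_simp
    exact mul_right_cancel₀ hrne (hmul.trans hmul2.symm)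
  have h1r : (τ - 1).re * (τ - 1).re - (τ - 1).im * (τ - 1).im = -(g / r) := by
    have := congrArg Complex.re hu2
    simpa [Complex.mul_re] using this
  have h2i : (τ - 1).re * (τ - 1).im + (τ - 1).im * (τ - 1).re = 0 := by
    have := congrArg Complex.im hu2
    simpa [Complex.mul_im] using this
  have ht_nonpos : -(g / r) ≤ 0 := neg_nonpos_of_nonneg (div_nonneg hg0 hr0.le)
  have hκne : (τ - 1).im ≠ 0 := by
    intro h0
    rw [h0] at h1r
    have hpp : (τ - 1).re * (τ - 1).re = -(g / r) := by linarith [h1r]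
    have hpz : (τ - 1).re = 0 := by nlinarith [mul_self_nonneg ((τ - 1).re)]
    exact hu (Complex.ext (by simpa using hpz) (by simpa using h0))
  have hpz : (τ - 1).re = 0 := by
    rcases mul_eq_zero.mp (by nlinarith [h2i] :
        (τ - 1).re * (τ - 1).im = 0) with h' | h'
    · exact h'
    · exact absurd h' hκne
  have hre1 : τ.re = 1 := by
    have : (τ - 1).re = τ.re - 1 := by simp
    linarith [hpz, this.symm.trans hpz]
  refine ⟨hre1, ?_⟩
  have hκτ : (τ - 1).im = τ.im := by simp
  have hκ2 : τ.im ^ 2 * r = g := by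
    have h' : (τ - 1).im * (τ - 1).im = g / r := by
      rw [hpz] at h1r
      have : -((τ - 1).im * (τ - 1).im) = -(g / r) := by linarith [h1r]
      linarith [this]
    have h'' : τ.im ^ 2 = g / r := by rw [← hκτ, pow_two]; exact h'
    rw [h'', div_mul_cancel₀ _ hr0.ne']
  -- Rayleigh bounds
  have hnn : ∀ w : Fin q → ℝ, 0 ≤ w ⬝ᵥ w :=
    fun w => Finset.sum_nonneg fun i _ => mul_self_nonneg _
  have hps : ∀ w : Fin q → ℝ, w ≠ 0 → 0 < w ⬝ᵥ w := fun w hw' =>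
    lt_of_le_of_ne (hnn w) (Ne.symm (mt dotProduct_self_eq_zero.mp hw'))
  have hn0 : 0 < a ⬝ᵥ a + b ⬝ᵥ b := by
    rcases hab with h' | h'
    · exact add_pos_of_pos_of_nonneg (hps a h') (hnn b)
    · exact add_pos_of_nonneg_of_pos (hnn a) (hps b h')
  have hgS : g ≤ (⨆ i : Fin q, hG.eigenvalues i) * (a ⬝ᵥ a + b ⬝ᵥ b) := by
    have h1 := qf_le_iSup hG a
    have h2 := qf_le_iSup hG b
    rw [hgdef, mul_add]
    exact add_le_add h1 h2
  have hIr : (⨅ i : Fin q, h𝓡.1.eigenvalues i) * (a ⬝ᵥ a + b ⬝ᵥ b) ≤ r := by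
    have h1 := iInf_le_qf h𝓡.1 a
    have h2 := iInf_le_qf h𝓡.1 b
    rw [hrdef, mul_add]
    exact add_le_add h1 h2
  have step2 : τ.im ^ 2 * (⨅ i : Fin q, h𝓡.1.eigenvalues i) * (a ⬝ᵥ a + b ⬝ᵥ b)
      ≤ (⨆ i : Fin q, hG.eigenvalues i) * (a ⬝ᵥ a + b ⬝ᵥ b) := by
    calc τ.im ^ 2 * (⨅ i : Fin q, h𝓡.1.eigenvalues i) * (a ⬝ᵥ a + b ⬝ᵥ b)
        = τ.im ^ 2 * ((⨅ i : Fin q, h𝓡.1.eigenvalues i) * (a ⬝ᵥ a + b ⬝ᵥ b)) := by ring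
      _ ≤ τ.im ^ 2 * r := mul_le_mul_of_nonneg_left hIr (sq_nonneg _)
      _ = g := hκ2
      _ ≤ (⨆ i : Fin q, hG.eigenvalues i) * (a ⬝ᵥ a + b ⬝ᵥ b) := hgS
  exact le_of_mul_le_mul_right step2 hn0
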